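/- Let Mac(k,d) denote the Macaulay matrix construction with the Koszul F5 criterion: rows are a row-echelon basis of ⟨F₁,…,F_{k−1}⟩_d together with {x^(β,d−d_k)·F_k : x^(β,d−d_k) ∈ K[S_Δ^h]_{d−d_k} not a leading monomial of ⟨F₁,…,F_{k−1}⟩_{d−d_k}}. Then the row space of Mac(k,d) equals the full degree-d component ⟨F₁,…,F_k⟩_d of the ideal. -/

import Mathlib

/-!
Taking graded components of the coefficients, every element of `⟨F₁,…,F_k⟩_d` is an element of
`⟨F₁,…,F_{k−1}⟩_d` plus `Q · F_k` with `Q` supported on monomials `x^m ∈ K[S]` of degree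
`d − d_k`. So it suffices that every such `x^m F_k` lies in the row space. If `x^m` is the
leading monomial of some `G ∈ ⟨F₁,…,F_{k−1}⟩_{d−d_k}`, then a multiple of `x^m F_k` equals
`G F_k ∈ ⟨F₁,…,F_{k−1}⟩_d` minus a combination of `x^{m'} F_k` with `m' < m`; otherwise
`x^m F_k` is itself a row. This is an induction along the monomial order, which is well founded
on `S` by Dickson's lemma, since `S` is finitely generated and `0` is its least element.
-/

def IsLM {K : Type} [Field K] {M : Type} [AddCommMonoid M]
    (lt : M → M → Prop) (f : AddMonoidAlgebra K M) (m : M) : Prop :=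
  m ∈ f.coeff.support ∧ ∀ m' ∈ f.coeff.support, m' = m ∨ lt m' m

open AddMonoidAlgebra DirectSum

section WellFounded

variable {M : Type*} [AddCommMonoid M] {S : AddSubmonoid M} {lt : M → M → Prop}

theorem not_lt_add_of_mem (hirrefl : ∀ a, ¬ lt a a) (htrans : ∀ a b c, lt a b → lt b c → lt a c)
    (hmin : ∀ a ∈ S, a ≠ 0 → lt 0 a)
    (hadd : ∀ a ∈ S, ∀ b ∈ S, ∀ c ∈ S, lt a b → lt (a + c) (b + c))
    {a s : M} (ha : a ∈ S) (hs : s ∈ S) : ¬ lt (a + s) a := by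
  intro hlt
  by_cases hs0 : s = 0
  · exact hirrefl a (by simpa [hs0] using hlt)
  · have hlt' : lt a (a + s) := by
      simpa [add_comm s] using hadd 0 S.zero_mem s hs a ha (hmin s hs hs0)
    exact hirrefl _ (htrans _ _ _ hlt hlt')

theorem AddSubmonoid.FG.wellFoundedOn (hS : S.FG) (hirrefl : ∀ a, ¬ lt a a)
    (htrans : ∀ a b c, lt a b → lt b c → lt a c) (hmin : ∀ a ∈ S, a ≠ 0 → lt 0 a)
    (hadd : ∀ a ∈ S, ∀ b ∈ S, ∀ c ∈ S, lt a b → lt (a + c) (b + c)) :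
    (S : Set M).WellFoundedOn lt := by
  have : IsStrictOrder M lt := { irrefl := hirrefl, trans := htrans }
  rw [Set.wellFoundedOn_iff_no_descending_seq]
  intro f hf
  obtain ⟨T, rfl⟩ := hS
  choose v hv using fun m => AddSubmonoid.mem_closure_finset'.1 (hf m)
  -- Dickson's lemma on the exponent vectors gives `i < j` with `f i` dividing `f j` in `S`.
  obtain ⟨i, j, hij, hle⟩ :=
    (Set.isPWO_of_wellQuasiOrderedLE Set.univ).exists_lt (f := v) fun _ => Set.mem_univ _
  set s := ∑ t : T, (v j t - v i t) • (t : M)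
  have hs : s ∈ AddSubmonoid.closure (T : Set M) :=
    AddSubmonoid.sum_mem _ fun t _ => AddSubmonoid.nsmul_mem _ (AddSubmonoid.subset_closure t.2) _
  have hfj : f j = f i + s := by
    rw [hv i, hv j, ← Finset.sum_add_distrib]
    exact Finset.sum_congr rfl fun t _ => by rw [← add_nsmul, Nat.add_sub_cancel' (hle t)]
  exact not_lt_add_of_mem hirrefl htrans hmin hadd (hf i) hs (hfj ▸ f.map_rel_iff.2 hij)

end WellFounded

section Algebra

variable {R : Type*} [CommSemiring R] {M : Type*} {ι : Type*}

theorem mem_supported_inter_of_mem_gradeBy {s : Set M} {deg : M → ι} {c : ι} {x : R[M]}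
    (hs : x ∈ supported R R s) (hc : x ∈ gradeBy R deg c) :
    x ∈ supported R R (s ∩ deg ⁻¹' {c}) :=
  Set.subset_inter hs hc

variable [AddCommMonoid M]

theorem mul_mem_supported {S : AddSubmonoid M} {f g : R[M]} (hf : f ∈ supported R R (S : Set M))
    (hg : g ∈ supported R R (S : Set M)) : f * g ∈ supported R R (S : Set M) := by
  classical
  intro q hq
  obtain ⟨a, ha, b, hb, rfl⟩ := Finset.mem_add.1 (support_coeff_mul_subset f g hq)
  exact S.add_mem (hf ha) (hg hb)

theorem decompose_mem_supported [AddMonoid ι] [DecidableEq ι] {deg : M →+ ι} {s : Set M}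
    {x : R[M]} (hx : x ∈ supported R R s) (c : ι) :
    (decompose (gradeBy R deg) x c : R[M]) ∈ supported R R s := by
  rw [supported_eq_span_single] at hx ⊢
  induction hx using Submodule.span_induction with
  | mem _ h =>
    obtain ⟨m, hm, rfl⟩ := h
    rw [GradesBy.decompose_single]
    rcases eq_or_ne (deg m) c with rfl | hmc
    · rw [of_eq_same]
      exact Submodule.subset_span ⟨m, hm, rfl⟩
    · rw [of_eq_of_ne _ _ _ hmc.symm]
      exact zero_mem _
  | zero => simp
  | add _ _ _ _ h₁ h₂ => simpa using add_mem h₁ h₂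
  | smul a _ _ h => simpa [DirectSum.smul_apply] using Submodule.smul_mem _ a h

/-- The degree-`c` part of the ideal generated by the `F i` in the semigroup algebra `R[S]`,
realised inside `R[M]`. -/
def idealComponent (S : Set M) (deg : M → ι) {k : ℕ} (F : Fin k → R[M]) (c : ι) : Set R[M] :=
  {g | g ∈ gradeBy R deg c ∧
    ∃ H : Fin k → R[M], (∀ i, H i ∈ supported R R S) ∧ g = ∑ i, H i * F i}

variable {S : AddSubmonoid M} {k : ℕ}

theorem idealComponent_subset_supported {deg : M → ι} {F : Fin k → R[M]}
    (hF : ∀ i, F i ∈ supported R R (S : Set M)) (c : ι) :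
    idealComponent S deg F c ⊆ supported R R (S ∩ deg ⁻¹' {c}) := by
  rintro g ⟨hdeg, H, hH, rfl⟩
  exact mem_supported_inter_of_mem_gradeBy
    (Submodule.sum_mem _ fun i _ => mul_mem_supported (hH i) (hF i)) hdeg

theorem idealComponent_castSucc_subset {deg : M → ι} {F : Fin (k + 1) → R[M]} (c : ι) :
    idealComponent S deg (fun i => F i.castSucc) c ⊆ idealComponent S deg F c := by
  rintro g ⟨hdeg, H, hH, rfl⟩
  refine ⟨hdeg, Fin.snoc H 0, Fin.lastCases (by simp) fun i => by simpa using hH i, ?_⟩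
  simp [Fin.sum_univ_castSucc]

theorem mul_mem_idealComponent [AddMonoid ι] {deg : M →+ ι} {F : Fin k → R[M]} {G Q : R[M]}
    {c j : ι} (hG : G ∈ idealComponent S deg F c) (hQS : Q ∈ supported R R (S : Set M))
    (hQ : Q ∈ gradeBy R deg j) : G * Q ∈ idealComponent S deg F (c + j) := by
  obtain ⟨hdeg, H, hH, rfl⟩ := hG
  refine ⟨SetLike.mul_mem_graded hdeg hQ, fun i => H i * Q,
    fun i => mul_mem_supported (hH i) hQS, ?_⟩
  simp only [Finset.sum_mul, mul_right_comm]

theorem mul_mem_idealComponent_of_mem_gradeBy {deg : M → ι} {F : Fin k → R[M]} {Q : R[M]}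
    {c : ι} (i : Fin k) (hQS : Q ∈ supported R R (S : Set M)) (hQ : Q * F i ∈ gradeBy R deg c) :
    Q * F i ∈ idealComponent S deg F c := by
  classical
  refine ⟨hQ, Pi.single i Q, fun j => ?_, by simp [Pi.single_apply]⟩
  rcases eq_or_ne j i with rfl | hji
  · simpa using hQS
  · simp [hji]

end Algebra

section Decomposition

variable {R : Type*} [CommSemiring R] {M : Type*} [AddCommMonoid M]
  {ι : Type*} [AddCommMonoid ι] [PartialOrder ι] [CanonicallyOrderedAdd ι] [Sub ι] [OrderedSub ι]
  [AddLeftReflectLE ι] [DecidableEq ι]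

theorem exists_eq_add_mul_last_of_mem_idealComponent {S : AddSubmonoid M} {deg : M →+ ι} {k : ℕ}
    {F : Fin (k + 1) → R[M]} {dF : Fin (k + 1) → ι} {e d : ι} {g : R[M]}
    (hF : ∀ i, F i ∈ gradeBy R deg (dF i)) (hd : d = e + dF (Fin.last k))
    (hg : g ∈ idealComponent S deg F d) :
    ∃ g₀ ∈ idealComponent S deg (fun i => F i.castSucc) d,
      ∃ Q ∈ supported R R (S ∩ deg ⁻¹' {e}), g = g₀ + Q * F (Fin.last k) := by
  classical
  obtain ⟨hgd, H, hH, rfl⟩ := hg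
  have hproj : ∀ i, ∃ H' ∈ supported R R (S : Set M),
      (decompose (gradeBy R deg) (H i * F i) d : R[M]) = H' * F i := by
    intro i
    rw [coe_decompose_mul_of_right_mem _ d (hF i)]
    split_ifs
    · exact ⟨_, decompose_mem_supported (hH i) _, rfl⟩
    · exact ⟨0, zero_mem _, (zero_mul _).symm⟩
  choose H' hH'S hH' using hproj
  have hlast : (decompose (gradeBy R deg) (H (Fin.last k) * F (Fin.last k)) d : R[M]) =
      decompose (gradeBy R deg) (H (Fin.last k)) e * F (Fin.last k) := by
    rw [coe_decompose_mul_of_right_mem_of_le _ (hF _) (hd ▸ le_add_self), hd,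
      add_tsub_cancel_right]
  refine ⟨∑ i : Fin k, H' i.castSucc * F i.castSucc,
    ⟨Submodule.sum_mem _ fun i _ => hH' i.castSucc ▸ SetLike.coe_mem _, _, fun i => hH'S _, rfl⟩,
    decompose (gradeBy R deg) (H (Fin.last k)) e,
    mem_supported_inter_of_mem_gradeBy (decompose_mem_supported (hH _) e) (SetLike.coe_mem _), ?_⟩
  rw [← decompose_of_mem_same _ hgd, decompose_sum, DFinsupp.finsetSum_apply,
    Submodule.coe_sum, Fin.sum_univ_castSucc, hlast]
  simp only [hH']

end Decomposition

section LeadingMonomials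

variable {K : Type} [Field K] {M : Type} [AddCommMonoid M]

theorem supported_le_of_not_isLM_single_mem {lt : M → M → Prop} {B : Set M} {P : Set K[M]}
    {W : Submodule K K[M]} (hwf : B.WellFoundedOn lt) (hPB : P ⊆ supported K K B) (hPW : P ⊆ W)
    (hW : ∀ m ∈ B, (¬ ∃ G ∈ P, G ≠ 0 ∧ IsLM lt G m) → single m 1 ∈ W) :
    supported K K B ≤ W := by
  classical
  rw [supported_eq_span_single, Submodule.span_le]
  rintro _ ⟨m, hm, rfl⟩
  refine hwf.induction hm (P := fun m => single m (1 : K) ∈ W) fun y hy ih => ?_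
  by_cases hLM : ∃ G ∈ P, G ≠ 0 ∧ IsLM lt G y
  · obtain ⟨G, hGP, -, hyG, hmax⟩ := hLM
    have hlower : ∑ p ∈ G.coeff.support.erase y, G.coeff p • single p (1 : K) ∈ W := by
      refine Submodule.sum_mem _ fun p hp => Submodule.smul_mem _ _ ?_
      obtain ⟨hpy, hpG⟩ := Finset.mem_erase.1 hp
      exact ih p (hPB hGP hpG) ((hmax p hpG).resolve_left hpy)
    have hG : G.coeff y • single y (1 : K) + ∑ p ∈ G.coeff.support.erase y,
        G.coeff p • single p (1 : K) = G := by
      rw [Finset.add_sum_erase _ (fun p => G.coeff p • single p (1 : K)) hyG]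
      conv_rhs => rw [← sum_coeff_single G]
      simp [Finsupp.sum]
    have hy : G.coeff y • single y (1 : K) ∈ W := by
      rw [eq_sub_of_add_eq hG]
      exact sub_mem (hPW hGP) hlower
    simpa [Finsupp.mem_support_iff.1 hyG] using W.smul_mem (G.coeff y)⁻¹ hy
  · exact hW y hy hLM

end LeadingMonomials

theorem stmt19_general (K : Type) [Field K] (n r k : ℕ)
    (S : AddSubmonoid ((Fin n → ℤ) × (Fin r → ℕ))) (hSfg : S.FG)
    (lt : ((Fin n → ℤ) × (Fin r → ℕ)) → ((Fin n → ℤ) × (Fin r → ℕ)) → Prop)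
    (hirrefl : ∀ a, ¬ lt a a)
    (htrans : ∀ a b c, lt a b → lt b c → lt a c)
    (hmin : ∀ a ∈ S, a ≠ (0 : ((Fin n → ℤ) × (Fin r → ℕ))) → lt 0 a)
    (hadd : ∀ a ∈ S, ∀ b ∈ S, ∀ c ∈ S, lt a b → lt (a + c) (b + c))
    -- F₁, …, F_k, the last one being F_k
    (F : Fin (k + 1) → AddMonoidAlgebra K ((Fin n → ℤ) × (Fin r → ℕ)))
    (dF : Fin (k + 1) → (Fin r → ℕ))
    (hFhom : ∀ i, ∀ p ∈ (F i).coeff.support, p.2 = dF i)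
    (hFS : ∀ i, ∀ p ∈ (F i).coeff.support, p ∈ S)
    (e d : Fin r → ℕ) (hd : d = e + dF (Fin.last k))
    -- the degree-c graded component of the ideal ⟨F₁,…,F_{k−1}⟩ in K[S_Δ^h]
    (Comp : (Fin r → ℕ) → Set (AddMonoidAlgebra K ((Fin n → ℤ) × (Fin r → ℕ))))
    (hComp : ∀ c, Comp c = {g | (∀ p ∈ g.coeff.support, p.2 = c) ∧
      ∃ H : Fin k → AddMonoidAlgebra K ((Fin n → ℤ) × (Fin r → ℕ)),
        (∀ i, ∀ p ∈ (H i).coeff.support, p ∈ S) ∧ g = ∑ i : Fin k, H i * F i.castSucc}) :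
    Submodule.span K
        (Comp d ∪
          {g | ∃ β : Fin n → ℤ, (β, e) ∈ S ∧
            (¬ ∃ G ∈ Comp e, G ≠ 0 ∧ IsLM lt G ((β, e) : (Fin n → ℤ) × (Fin r → ℕ))) ∧
            g = AddMonoidAlgebra.single ((β, e) : (Fin n → ℤ) × (Fin r → ℕ)) (1 : K) *
              F (Fin.last k)}) =
      Submodule.span K
        {g : AddMonoidAlgebra K ((Fin n → ℤ) × (Fin r → ℕ)) |
          (∀ p ∈ g.coeff.support, p.2 = d) ∧
          ∃ H : Fin (k + 1) → AddMonoidAlgebra K ((Fin n → ℤ) × (Fin r → ℕ)),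
            (∀ i, ∀ p ∈ (H i).coeff.support, p ∈ S) ∧ g = ∑ i, H i * F i} := by
  let deg := AddMonoidHom.snd (Fin n → ℤ) (Fin r → ℕ)
  obtain rfl : Comp = idealComponent S deg (fun i => F i.castSucc) := funext hComp
  change _ = Submodule.span K (idealComponent S deg F d)
  have hF : ∀ i, F i ∈ gradeBy K deg (dF i) := hFhom
  have hF_last : F (Fin.last k) ∈ supported K K (S : Set _) := hFS _
  apply le_antisymm
  · rw [Submodule.span_le]
    rintro _ (hg | ⟨β, hβ, -, rfl⟩)
    · exact Submodule.subset_span (idealComponent_castSucc_subset d hg)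
    · refine Submodule.subset_span (mul_mem_idealComponent_of_mem_gradeBy _ ?_ ?_)
      · exact mem_supported.2 (by simpa using hβ)
      · exact hd ▸ SetLike.mul_mem_graded (single_mem_gradeBy _ _ _) (hF _)
  · rw [Submodule.span_le]
    intro g hg
    obtain ⟨g₀, hg₀, Q, hQ, rfl⟩ := exists_eq_add_mul_last_of_mem_idealComponent hF hd hg
    refine add_mem (Submodule.subset_span (Or.inl hg₀)) ?_
    have hwf : (S ∩ deg ⁻¹' {e} : Set _).WellFoundedOn lt :=
      (hSfg.wellFoundedOn hirrefl htrans hmin hadd).subset Set.inter_subset_left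
    refine supported_le_of_not_isLM_single_mem (P := idealComponent S deg (fun i => F i.castSucc) e)
      (W := (Submodule.span K _).comap (LinearMap.mulRight K (F (Fin.last k)))) hwf
      (idealComponent_subset_supported (fun _ => hFS _) e) (fun G hG => ?_) ?_ hQ
    · exact Submodule.subset_span (Or.inl (hd ▸ mul_mem_idealComponent hG hF_last (hF _)))
    · rintro ⟨β, e'⟩ ⟨hmS, rfl : e' = e⟩ hfree
      exact Submodule.subset_span (Or.inr ⟨β, hmS, hfree, rfl⟩)

/-- correctness of the F5-pruned Macaulay matrix. The span of
⟨F₁,…,F_{k−1}⟩_d together with the products x^(β,d−d_k)·F_k over monomials x^(β,d−d_k)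
of K[S_Δ^h]_{d−d_k} that are not leading monomials of ⟨F₁,…,F_{k−1}⟩_{d−d_k} equals the
full degree-d component ⟨F₁,…,F_k⟩_d of the ideal. -/
theorem stmt19 (K : Type) [Field K] (n r k : ℕ)
    (S : AddSubmonoid ((Fin n → ℤ) × (Fin r → ℕ))) (hSfg : S.FG)
    (lt : ((Fin n → ℤ) × (Fin r → ℕ)) → ((Fin n → ℤ) × (Fin r → ℕ)) → Prop)
    (htotal : ∀ a ∈ S, ∀ b ∈ S, a = b ∨ lt a b ∨ lt b a)
    (hirrefl : ∀ a, ¬ lt a a)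
    (htrans : ∀ a b c, lt a b → lt b c → lt a c)
    (hmin : ∀ a ∈ S, a ≠ (0 : ((Fin n → ℤ) × (Fin r → ℕ))) → lt 0 a)
    (hadd : ∀ a ∈ S, ∀ b ∈ S, ∀ c ∈ S, lt a b → lt (a + c) (b + c))
    -- F₁, …, F_k, the last one being F_k
    (F : Fin (k + 1) → AddMonoidAlgebra K ((Fin n → ℤ) × (Fin r → ℕ)))
    (dF : Fin (k + 1) → (Fin r → ℕ))
    (hFhom : ∀ i, ∀ p ∈ (F i).coeff.support, p.2 = dF i)
    (hFS : ∀ i, ∀ p ∈ (F i).coeff.support, p ∈ S)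
    (e d : Fin r → ℕ) (hd : d = e + dF (Fin.last k))
    -- the degree-c graded component of the ideal ⟨F₁,…,F_{k−1}⟩ in K[S_Δ^h]
    (Comp : (Fin r → ℕ) → Set (AddMonoidAlgebra K ((Fin n → ℤ) × (Fin r → ℕ))))
    (hComp : ∀ c, Comp c = {g | (∀ p ∈ g.coeff.support, p.2 = c) ∧
      ∃ H : Fin k → AddMonoidAlgebra K ((Fin n → ℤ) × (Fin r → ℕ)),
        (∀ i, ∀ p ∈ (H i).coeff.support, p ∈ S) ∧ g = ∑ i : Fin k, H i * F i.castSucc}) :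
    Submodule.span K
        (Comp d ∪
          {g | ∃ β : Fin n → ℤ, (β, e) ∈ S ∧
            (¬ ∃ G ∈ Comp e, G ≠ 0 ∧ IsLM lt G ((β, e) : (Fin n → ℤ) × (Fin r → ℕ))) ∧
            g = AddMonoidAlgebra.single ((β, e) : (Fin n → ℤ) × (Fin r → ℕ)) (1 : K) *
              F (Fin.last k)}) =
      Submodule.span K
        {g : AddMonoidAlgebra K ((Fin n → ℤ) × (Fin r → ℕ)) |
          (∀ p ∈ g.coeff.support, p.2 = d) ∧
          ∃ H : Fin (k + 1) → AddMonoidAlgebra K ((Fin n → ℤ) × (Fin r → ℕ)),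
            (∀ i, ∀ p ∈ (H i).coeff.support, p ∈ S) ∧ g = ∑ i, H i * F i} :=
  stmt19_general K n r k S hSfg lt hirrefl htrans hmin hadd F dF hFhom hFS e d hd Comp hComp
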